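/- Let t ≥ 1 and let C be a CA_X((t+1)!; t, t+1, 2). Then for each 0 ≤ i ≤ t+1 there is a constant x_i such that every vector in {0,1}^{t+1} of weight i appears as a row of C exactly x_i times; moreover, x_i + x_{i+1} = i!·(t−i)! for 0 ≤ i ≤ t. -/

import Mathlib

/-- A permutation `π` of `[v]` covers a sequence `s` of distinct elements if the
elements appear in order in `π`, i.e. `π⁻¹(s i) < π⁻¹(s j)` for `i < j`. -/
def SeqCovers {v t : ℕ} (π : Equiv.Perm (Fin v)) (s : Fin t → Fin v) : Prop :=
  ∀ i j : Fin t, i < j → π.symm (s i) < π.symm (s j)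

instance {v t : ℕ} (s : Fin t → Fin v) :
    DecidablePred fun π : Equiv.Perm (Fin v) => SeqCovers π s := fun π => by
  unfold SeqCovers; infer_instance

/-- `X` is a sequence covering array SCA(N; t, v): a set of `N` permutations of `[v]`
such that every sequence of `t` distinct elements of `[v]` is covered by at least one. -/
def IsSCA (N t v : ℕ) (X : Finset (Equiv.Perm (Fin v))) : Prop :=
  X.card = N ∧ ∀ s : Fin t → Fin v, Function.Injective s → ∃ π ∈ X, SeqCovers π s

/-- `μ(T)` for a `t`-way interaction with symbol vector `ν`: the product over symbols `σ`
of `|τ_σ(T)|!` where `τ_σ(T)` is the set of positions carrying symbol `σ`. -/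
def mu {w t : ℕ} (ν : Fin t → Fin w) : ℕ :=
  ∏ σ : Fin w, Nat.factorial (Finset.univ.filter fun i => ν i = σ).card

/-- The number of rows of `C` covering the interaction given by distinct columns `c i`
and symbols `ν i`. -/
def CoversCount {κ : Type} {w t : ℕ}
    (C : Multiset (κ → Fin w)) (c : Fin t → κ) (ν : Fin t → Fin w) : ℕ :=
  C.countP fun ρ => ∀ i, ρ (c i) = ν i

/-- `C` is an excess coverage array CA_X(N; t, k, v): an `N × k` array (multiset of rows)
over `[v]` in which every `t`-way interaction `T` is covered by at least `μ(T)` rows. -/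
def IsCAX (N t k v : ℕ) (C : Multiset (Fin k → Fin v)) : Prop :=
  Multiset.card C = N ∧
  ∀ c : Fin t → Fin k, Function.Injective c →
    ∀ ν : Fin t → Fin v, mu ν ≤ CoversCount C c ν

/-!
Over the `2 ^ t` symbol vectors on a fixed set of `t` columns, the values `μ(T)` add up to
`∑_{S ⊆ [t]} |S|! (t - |S|)! = (t + 1)!`, the number of rows. Hence in a
CA_X((t+1)!; t, t+1, 2) every `t`-way interaction is covered exactly `μ(T)` times. For the `t`
columns other than `j` this says that the multiplicities of the two rows agreeing with `u` off
column `j` add up to `w! (t - w)!`, where `w` is the weight of `u` off column `j`. Turning a `1` of a vector of weight `k + 1` into a `0`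
shows, by induction on `k`, that the multiplicity of a row depends only on its weight, and the same
relation then gives `x i + x (i + 1) = i! (t - i)!`.
-/

open Finset Function
open scoped Nat

section Coverage

variable {κ : Type} {w t : ℕ}

theorem coversCount_eq_count_map (C : Multiset (κ → Fin w)) (c : Fin t → κ)
    (ν : Fin t → Fin w) : CoversCount C c ν = (C.map (· ∘ c)).count ν := by
  rw [Multiset.count_map, CoversCount, Multiset.countP_eq_card_filter]
  exact congrArg _ (Multiset.filter_congr fun ρ _ => by simp [funext_iff, eq_comm])

theorem sum_coversCount (C : Multiset (κ → Fin w)) (c : Fin t → κ) :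
    ∑ ν, CoversCount C c ν = Multiset.card C := by
  simp_rw [coversCount_eq_count_map]
  rw [Multiset.sum_count_eq_card fun _ _ => mem_univ _, Multiset.card_map]

theorem IsCAX.coversCount_eq_mu {N k : ℕ} {C : Multiset (Fin k → Fin w)} (hC : IsCAX N t k w C)
    (hN : ∑ ν : Fin t → Fin w, mu ν = N) {c : Fin t → Fin k} (hc : Injective c)
    (ν : Fin t → Fin w) : CoversCount C c ν = mu ν := by
  have hsum : ∑ ν : Fin t → Fin w, mu ν = ∑ ν, CoversCount C c ν := by
    rw [sum_coversCount, hC.1, hN]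
  exact ((sum_eq_sum_iff_of_le fun ν _ => hC.2 c hc ν).1 hsum ν (mem_univ ν)).symm

theorem coversCount_succAbove (C : Multiset (Fin (t + 1) → Fin w)) (v : Fin (t + 1) → Fin w)
    (j : Fin (t + 1)) :
    CoversCount C j.succAbove (v ∘ j.succAbove) = ∑ σ, C.count (update v j σ) := by
  rw [CoversCount, Multiset.countP_eq_card_filter, ← Multiset.card_map (· j),
    ← Multiset.sum_count_eq_card (s := univ) fun _ _ => mem_univ _]
  refine sum_congr rfl fun σ _ => ?_
  rw [Multiset.count_map, Multiset.filter_filter, Multiset.count_eq_card_filter_eq]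
  refine congrArg _ (Multiset.filter_congr fun ρ _ => ?_)
  simp [update_eq_iff, j.forall_iff_succAbove, @eq_comm _ (v _)]

end Coverage

section Binary

variable {n t : ℕ}

def weight (u : Fin n → Fin 2) : ℕ := #{j | u j = 1}

theorem weight_le (u : Fin n → Fin 2) : weight u ≤ n :=
  (card_le_univ _).trans_eq (Fintype.card_fin n)

theorem weight_eq_zero_iff {u : Fin n → Fin 2} : weight u = 0 ↔ u = 0 := by
  simp only [weight, card_eq_zero, filter_eq_empty_iff, mem_univ, true_implies, funext_iff,
    Pi.zero_apply]
  exact forall_congr' fun j => by omega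

theorem weight_eq_add_weight_comp_succAbove (u : Fin (n + 1) → Fin 2) (j : Fin (n + 1)) :
    weight u = u j + weight (u ∘ j.succAbove) := by
  have hval : ∀ b : Fin 2, (if b = 1 then 1 else 0) = (b : ℕ) := by decide
  simp only [weight, card_filter, Fin.sum_univ_succAbove _ j, comp_apply, hval]

theorem weight_update_zero_add_one {u : Fin n → Fin 2} {j : Fin n} (hu : u j = 1) :
    weight (update u j 0) + 1 = weight u := by
  have hfilter :
      ({k | update u j 0 k = 1} : Finset (Fin n)) = ({k | u k = 1} : Finset _).erase j := by
    ext k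
    by_cases hk : k = j <;> simp [hk, update_apply]
  rw [weight, hfilter, card_erase_add_one (by simpa using hu), weight]

def firstOnes (n i : ℕ) : Fin n → Fin 2 := fun j => if (j : ℕ) < i then 1 else 0

theorem weight_firstOnes (n i : ℕ) : weight (firstOnes n i) = min n i := by
  rw [weight, ← Fin.card_filter_val_lt]
  exact congrArg _ (filter_congr fun j _ => by simp [firstOnes])

theorem update_firstOnes_succ {i : ℕ} (hi : i < n) :
    update (firstOnes n (i + 1)) ⟨i, hi⟩ 0 = firstOnes n i := by
  funext j
  simp only [update_apply, firstOnes, Fin.ext_iff]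
  split_ifs <;> omega

theorem eq_of_weight_eq {f : (Fin n → Fin 2) → ℕ} {g : ℕ → ℕ}
    (hf : ∀ u j, u j = 1 → f (update u j 0) + f u = g (weight (update u j 0)))
    {u u' : Fin n → Fin 2} (h : weight u = weight u') : f u = f u' := by
  induction hk : weight u generalizing u u' with
  | zero => rw [weight_eq_zero_iff.1 hk, weight_eq_zero_iff.1 (h.symm.trans hk)]
  | succ k ih =>
    have hdrop (v : Fin n → Fin 2) (hv : weight v = k + 1) :
        ∃ j, v j = 1 ∧ weight (update v j 0) = k := by
      obtain ⟨j, hj⟩ := card_pos.1 (hv.trans_gt k.succ_pos)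
      have hj : v j = 1 := (mem_filter.1 hj).2
      exact ⟨j, hj, by have := weight_update_zero_add_one hj; omega⟩
    obtain ⟨j, hj, hlow⟩ := hdrop u hk
    obtain ⟨j', hj', hlow'⟩ := hdrop u' (h.symm.trans hk)
    have hpair := hf u j hj
    have hpair' := hf u' j' hj'
    rw [hlow] at hpair
    rw [hlow'] at hpair'
    have := ih (hlow.trans hlow'.symm) hlow
    omega

theorem mu_eq_factorial_mul_factorial (ν : Fin t → Fin 2) :
    mu ν = (t - weight ν)! * (weight ν)! := by
  have hcompl : #{i | ν i = 0} + weight ν = t := by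
    have h := card_filter_add_card_filter_not (s := univ) (fun i => ν i = 1)
    rw [card_univ, Fintype.card_fin,
      filter_congr fun i _ => (by omega : ¬ν i = 1 ↔ ν i = 0)] at h
    rw [weight]
    omega
  rw [mu, Fin.prod_univ_two, show #{i | ν i = 0} = t - weight ν by omega]
  rfl

theorem sum_factorial_sub_card_mul_factorial_card (α : Type*) [Fintype α] :
    ∑ s : Finset α, (Fintype.card α - #s)! * (#s)! = (Fintype.card α + 1)! := by
  rw [← powerset_univ, sum_powerset_apply_card (fun k => (Fintype.card α - k)! * k !),
    card_univ, Nat.factorial_succ]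
  have hterm : ∀ k ∈ range (Fintype.card α + 1),
      (Fintype.card α).choose k • ((Fintype.card α - k)! * k !) = (Fintype.card α)! := by
    intro k hk
    rw [smul_eq_mul, ← mul_assoc, mul_right_comm,
      Nat.choose_mul_factorial_mul_factorial (Nat.lt_succ_iff.1 (mem_range.1 hk))]
  rw [sum_congr rfl hterm, sum_const, card_range, smul_eq_mul]

theorem sum_mu_fin_two : ∑ ν : Fin t → Fin 2, mu ν = (t + 1)! := by
  calc ∑ ν : Fin t → Fin 2, mu ν = ∑ s : Finset (Fin t), (t - #s)! * (#s)! := by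
        refine sum_nbij' (fun ν => ({j | ν j = 1} : Finset (Fin t)))
          (fun s j => if j ∈ s then 1 else 0) (by simp) (by simp) (fun ν _ => ?_) (fun s _ => ?_)
          (fun ν _ => mu_eq_factorial_mul_factorial ν)
        · funext j
          by_cases h : ν j = 1 <;> simp [h]
          omega
        · ext j
          by_cases h : j ∈ s <;> simp [h]
    _ = (t + 1)! := by simpa using sum_factorial_sub_card_mul_factorial_card (Fin t)

theorem IsCAX.count_update_zero_add_count {C : Multiset (Fin (t + 1) → Fin 2)}
    (hC : IsCAX (t + 1)! t (t + 1) 2 C) {u : Fin (t + 1) → Fin 2} {j : Fin (t + 1)}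
    (hu : u j = 1) :
    C.count (update u j 0) + C.count u =
      (t - weight (update u j 0))! * (weight (update u j 0))! := by
  have hsum :
      ∑ σ, C.count (update (update u j 0) j σ) = C.count (update u j 0) + C.count u := by
    have hu' : update u j 1 = u := update_eq_self_iff.2 hu.symm
    rw [Fin.sum_univ_two, update_idem, update_idem, hu']
  have hweight : weight (update u j 0) = weight (update u j 0 ∘ j.succAbove) := by
    simpa using weight_eq_add_weight_comp_succAbove (update u j 0) j
  rw [← hsum, ← coversCount_succAbove,
    hC.coversCount_eq_mu sum_mu_fin_two j.succAbove_right_injective,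
    mu_eq_factorial_mul_factorial, hweight]

end Binary

theorem binary_cax_weight_multiplicities_general (t : ℕ)
    (C : Multiset (Fin (t + 1) → Fin 2))
    (hC : IsCAX (Nat.factorial (t + 1)) t (t + 1) 2 C) :
    ∃ x : ℕ → ℕ,
      (∀ u : Fin (t + 1) → Fin 2,
        C.count u = x (Finset.univ.filter fun j => u j = 1).card) ∧
      (∀ i ≤ t, x i + x (i + 1) = Nat.factorial i * Nat.factorial (t - i)) := by
  refine ⟨fun i => C.count (firstOnes (t + 1) i), fun u => ?_, fun i hi => ?_⟩
  · refine eq_of_weight_eq (f := (C.count ·)) (g := fun k => (t - k)! * k !)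
      (fun _ _ => hC.count_update_zero_add_count) ?_
    show weight u = weight (firstOnes (t + 1) (weight u))
    rw [weight_firstOnes, min_eq_right (weight_le u)]
  · have hpair := hC.count_update_zero_add_count (u := firstOnes (t + 1) (i + 1))
      (j := ⟨i, by omega⟩) (by simp [firstOnes])
    rw [update_firstOnes_succ, weight_firstOnes, min_eq_right (by omega)] at hpair
    rw [hpair, mul_comm]

/-- In a CA_X((t+1)!; t, t+1, 2), for each `0 ≤ i ≤ t+1` there is a
constant `x i` such that every vector of `{0,1}^{t+1}` of weight `i` appears as a row
exactly `x i` times; moreover `x i + x (i+1) = i!·(t−i)!` for `0 ≤ i ≤ t`. -/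
theorem binary_cax_weight_multiplicities (t : ℕ) (ht : 1 ≤ t)
    (C : Multiset (Fin (t + 1) → Fin 2))
    (hC : IsCAX (Nat.factorial (t + 1)) t (t + 1) 2 C) :
    ∃ x : ℕ → ℕ,
      (∀ u : Fin (t + 1) → Fin 2,
        C.count u = x (Finset.univ.filter fun j => u j = 1).card) ∧
      (∀ i ≤ t, x i + x (i + 1) = Nat.factorial i * Nat.factorial (t - i)) :=
  binary_cax_weight_multiplicities_general t C hC
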